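/- arXiv:1812.02816 — 4 statements merged into one kernel-verified Lean document; each statement's English description precedes it below -/
import Mathlib

section
/- Every fourth-order tensor A on ℝ^d with minor and major index symmetries that is isotropic (commutes with the orthogonal group action) can be written uniquely as A = a J + b K with a = (A :: J)/(J :: J) = (1/d) A_{iijj} and b = (A :: K)/(K :: K) = (A_{ijij} − (1/d) A_{iijj})/(d(d+1)/2 − 1). -/
open scoped BigOperators

/-- Fourth-order tensors on ℝ^d. -/
abbrev Tensor4 (d : ℕ) := Fin d → Fin d → Fin d → Fin d → ℝ

/-- The symmetric identity tensor (Isym)_{ijkl} = (δ_{ik}δ_{jl} + δ_{il}δ_{jk})/2. -/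
noncomputable def Isym (d : ℕ) : Tensor4 d :=
  fun i j k l =>
    ((if i = k then (1:ℝ) else 0) * (if j = l then 1 else 0) +
     (if i = l then (1:ℝ) else 0) * (if j = k then 1 else 0)) / 2

/-- The spherical projector J = (1/d) I ⊗ I. -/
noncomputable def Jt (d : ℕ) : Tensor4 d :=
  fun i j k l => (if i = j then (1:ℝ) else 0) * (if k = l then 1 else 0) / d

/-- The deviatoric projector K = Isym − J. -/
noncomputable def Kt (d : ℕ) : Tensor4 d :=
  fun i j k l => Isym d i j k l - Jt d i j k l

/-- Full double contraction A :: B = A_{ijkl} B_{ijkl}. -/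
def fullContr {d : ℕ} (A B : Tensor4 d) : ℝ :=
  ∑ i, ∑ j, ∑ k, ∑ l, A i j k l * B i j k l

/-- Action of a fourth-order tensor on a second-order tensor: (A : τ)_{ij} = A_{ijkl} τ_{kl}. -/
def act {d : ℕ} (A : Tensor4 d) (τ : Fin d → Fin d → ℝ) : Fin d → Fin d → ℝ :=
  fun i j => ∑ k, ∑ l, A i j k l * τ k l

/-- Frobenius inner product of second-order tensors. -/
def inn {d : ℕ} (σ τ : Fin d → Fin d → ℝ) : ℝ := ∑ i, ∑ j, σ i j * τ i j

/-- Trace of a second-order tensor. -/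
def trace2 {d : ℕ} (τ : Fin d → Fin d → ℝ) : ℝ := ∑ i, τ i i

/-- Deviatoric part of a second-order tensor. -/
noncomputable def dev {d : ℕ} (τ : Fin d → Fin d → ℝ) : Fin d → Fin d → ℝ :=
  fun i j => τ i j - trace2 τ / d * (if i = j then 1 else 0)

/-- Tensor product of two second-order tensors: (σ ⊗ τ)_{ijkl} = σ_{ij} τ_{kl}. -/
def tens {d : ℕ} (σ τ : Fin d → Fin d → ℝ) : Tensor4 d :=
  fun i j k l => σ i j * τ k l

lemma col_of_row {d : ℕ} (Q : Fin d → Fin d → ℝ)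
    (h : ∀ i j, (∑ k, Q i k * Q j k) = if i = j then (1:ℝ) else 0) :
    ∀ i j, (∑ k, Q k i * Q k j) = if i = j then (1:ℝ) else 0 := by
  have h1 : (Matrix.of Q) * (Matrix.of Q).transpose = 1 := by
    ext i j
    simpa [Matrix.mul_apply, Matrix.one_apply] using h i j
  have h2 : (Matrix.of Q).transpose * (Matrix.of Q) = 1 := mul_eq_one_comm.mp h1
  intro i j
  have := congrFun (congrFun h2 i) j
  simpa [Matrix.mul_apply, Matrix.one_apply, Matrix.transpose_apply] using this

lemma sum4_delta {d : ℕ} (A : Tensor4 d) (f : Fin d → Fin d) (c : Fin d → ℝ)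
    (i j k l : Fin d) :
    (∑ p, ∑ q, ∑ r, ∑ s, (if p = f i then c i else 0) * (if q = f j then c j else 0) *
      (if r = f k then c k else 0) * (if s = f l then c l else 0) * A p q r s)
      = c i * c j * c k * c l * A (f i) (f j) (f k) (f l) := by
  simp [Finset.sum_ite_eq', ite_mul, mul_ite, mul_zero, zero_mul, Finset.mul_sum]

section Pointwise
variable {d : ℕ} (A : Tensor4 d)
  (hminor2 : ∀ i j k l, A i j k l = A i j l k)
  (hiso : ∀ Q : Fin d → Fin d → ℝ,
      (∀ i j, (∑ k, Q i k * Q j k) = (if i = j then (1:ℝ) else 0)) →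
      (∀ i j, (∑ k, Q k i * Q k j) = (if i = j then (1:ℝ) else 0)) →
      ∀ i j k l, (∑ p, ∑ q, ∑ r, ∑ s, Q i p * Q j q * Q k r * Q l s * A p q r s)
        = A i j k l)

include hiso in
lemma perm_inv (σ : Equiv.Perm (Fin d)) (i j k l : Fin d) :
    A (σ i) (σ j) (σ k) (σ l) = A i j k l := by
  have hrow : ∀ i j, (∑ k, (fun a b => if b = σ a then (1:ℝ) else 0) i k *
      (fun a b => if b = σ a then (1:ℝ) else 0) j k) = if i = j then (1:ℝ) else 0 := by
    intro i j
    simp [Finset.sum_ite_eq', ite_mul, mul_ite, eq_comm]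
  have h := hiso _ hrow (col_of_row _ hrow) i j k l
  have h2 := sum4_delta A σ (fun _ => (1:ℝ)) i j k l
  simp only [one_mul] at h2
  rw [← h, h2]

include hiso in
lemma flip_inv (m i j k l : Fin d) :
    A i j k l = (if i = m then (-1:ℝ) else 1) * (if j = m then (-1:ℝ) else 1) *
      (if k = m then (-1:ℝ) else 1) * (if l = m then (-1:ℝ) else 1) * A i j k l := by
  set c : Fin d → ℝ := fun a => if a = m then (-1:ℝ) else 1 with hc
  have hrow : ∀ i j, (∑ k, (fun a b => if b = a then c a else 0) i k *
      (fun a b => if b = a then c a else 0) j k) = if i = j then (1:ℝ) else 0 := by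
    intro i j
    rcases eq_or_ne i j with h | h
    · subst h
      simp [Finset.sum_ite_eq', ite_mul, mul_ite, hc]
      split <;> norm_num
    · simp [Finset.sum_ite_eq', ite_mul, mul_ite, h, Ne.symm h]
  have h := hiso _ hrow (col_of_row _ hrow) i j k l
  have h2 := sum4_delta A id c i j k l
  simp only [id] at h2
  rw [h2] at h
  exact h.symm

include hiso in
lemma flip_zero (m i j k l : Fin d)
    (hs : (if i = m then (-1:ℝ) else 1) * (if j = m then (-1:ℝ) else 1) *
      (if k = m then (-1:ℝ) else 1) * (if l = m then (-1:ℝ) else 1) = -1) :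
    A i j k l = 0 := by
  have h := flip_inv A hiso m i j k l
  rw [hs] at h
  linarith

end Pointwise

section Pointwise2
variable {d : ℕ} (A : Tensor4 d)
  (hminor2 : ∀ i j k l, A i j k l = A i j l k)
  (hiso : ∀ Q : Fin d → Fin d → ℝ,
      (∀ i j, (∑ k, Q i k * Q j k) = (if i = j then (1:ℝ) else 0)) →
      (∀ i j, (∑ k, Q k i * Q k j) = (if i = j then (1:ℝ) else 0)) →
      ∀ i j k l, (∑ p, ∑ q, ∑ r, ∑ s, Q i p * Q j q * Q k r * Q l s * A p q r s)
        = A i j k l)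

lemma exists_perm_pair {e0 e1 i k : Fin d} (he : e0 ≠ e1) (hik : i ≠ k) :
    ∃ σ : Equiv.Perm (Fin d), σ e0 = i ∧ σ e1 = k := by
  refine ⟨(Equiv.swap e1 ((Equiv.swap e0 i) k)).trans (Equiv.swap e0 i), ?_, ?_⟩
  · have hk' : (Equiv.swap e0 i) k ≠ e0 := by
      intro h
      have := congrArg (Equiv.swap e0 i) h
      rw [Equiv.swap_apply_self, Equiv.swap_apply_left] at this
      exact hik this.symm
    simp [Equiv.trans_apply, Equiv.swap_apply_of_ne_of_ne he (Ne.symm hk'),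
      Equiv.swap_apply_left]
  · simp [Equiv.trans_apply, Equiv.swap_apply_left, Equiv.swap_apply_self]

include hiso in
lemma pair_val {e0 e1 i k : Fin d} (he : e0 ≠ e1) (hik : i ≠ k) :
    A i i k k = A e0 e0 e1 e1 ∧ A i k i k = A e0 e1 e0 e1 := by
  obtain ⟨σ, h0, h1⟩ := exists_perm_pair he hik
  constructor
  · have := perm_inv A hiso σ e0 e0 e1 e1
    rw [h0, h1] at this
    exact this
  · have := perm_inv A hiso σ e0 e1 e0 e1
    rw [h0, h1] at this
    exact this

include hiso in
lemma diag_val {e0 i : Fin d} : A i i i i = A e0 e0 e0 e0 := by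
  have := perm_inv A hiso (Equiv.swap e0 i) e0 e0 e0 e0
  rw [Equiv.swap_apply_left] at this
  exact this

end Pointwise2

noncomputable def QRot {d : ℕ} (e0 e1 : Fin d) (c : ℝ) : Fin d → Fin d → ℝ := fun i k =>
  if i = e0 then ((if k = e0 then c else 0) + (if k = e1 then c else 0))
  else if i = e1 then ((if k = e0 then -c else 0) + (if k = e1 then c else 0))
  else if k = i then 1 else 0

lemma QRot_row {d : ℕ} {e0 e1 : Fin d} (he : e0 ≠ e1) {c : ℝ} (hc : c * c = 1/2) :
    ∀ i j, (∑ k, QRot e0 e1 c i k * QRot e0 e1 c j k) = if i = j then (1:ℝ) else 0 := by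
  intro i j
  rcases eq_or_ne i e0 with hi0 | hi0
  · rcases eq_or_ne j e0 with hj0 | hj0
    · subst hi0 hj0
      simp [QRot, add_mul, mul_add, Finset.sum_add_distrib, ite_mul, mul_ite, mul_zero,
        zero_mul, Finset.sum_ite_eq', he, Ne.symm he]
      linarith
    · rcases eq_or_ne j e1 with hj1 | hj1
      · subst hi0 hj1
        simp [QRot, add_mul, mul_add, Finset.sum_add_distrib, ite_mul, mul_ite, mul_zero,
          zero_mul, Finset.sum_ite_eq', he, Ne.symm he]
      · subst hi0
        simp [QRot, add_mul, mul_add, Finset.sum_add_distrib, ite_mul, mul_ite, mul_zero,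
          zero_mul, Finset.sum_ite_eq', he, Ne.symm he, hj0, hj1, Ne.symm hj0, Ne.symm hj1]
  · rcases eq_or_ne i e1 with hi1 | hi1
    · rcases eq_or_ne j e0 with hj0 | hj0
      · subst hi1 hj0
        simp [QRot, add_mul, mul_add, Finset.sum_add_distrib, ite_mul, mul_ite, mul_zero,
          zero_mul, Finset.sum_ite_eq', he, Ne.symm he]
      · rcases eq_or_ne j e1 with hj1 | hj1
        · subst hi1 hj1
          simp [QRot, add_mul, mul_add, Finset.sum_add_distrib, ite_mul, mul_ite, mul_zero,
            zero_mul, Finset.sum_ite_eq', he, Ne.symm he]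
          linarith
        · subst hi1
          simp [QRot, add_mul, mul_add, Finset.sum_add_distrib, ite_mul, mul_ite, mul_zero,
            zero_mul, Finset.sum_ite_eq', he, Ne.symm he, hj0, hj1, Ne.symm hj0, Ne.symm hj1]
    · rcases eq_or_ne j e0 with hj0 | hj0
      · subst hj0
        simp [QRot, add_mul, mul_add, Finset.sum_add_distrib, ite_mul, mul_ite, mul_zero,
          zero_mul, Finset.sum_ite_eq', he, Ne.symm he, hi0, hi1, Ne.symm hi0, Ne.symm hi1]
      · rcases eq_or_ne j e1 with hj1 | hj1
        · subst hj1
          simp [QRot, add_mul, mul_add, Finset.sum_add_distrib, ite_mul, mul_ite, mul_zero,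
            zero_mul, Finset.sum_ite_eq', he, Ne.symm he, hi0, hi1, Ne.symm hi0, Ne.symm hi1]
        · rcases eq_or_ne i j with hij | hij
          · subst hij
            simp [QRot, ite_mul, mul_ite, mul_zero, zero_mul, Finset.sum_ite_eq',
              hi0, hi1]
          · simp [QRot, ite_mul, mul_ite, mul_zero, zero_mul, Finset.sum_ite_eq',
              hi0, hi1, hj0, hj1, hij, Ne.symm hij]

section Rot
variable {d : ℕ} (A : Tensor4 d)
  (hminor2 : ∀ i j k l, A i j k l = A i j l k)
  (hiso : ∀ Q : Fin d → Fin d → ℝ,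
      (∀ i j, (∑ k, Q i k * Q j k) = (if i = j then (1:ℝ) else 0)) →
      (∀ i j, (∑ k, Q k i * Q k j) = (if i = j then (1:ℝ) else 0)) →
      ∀ i j k l, (∑ p, ∑ q, ∑ r, ∑ s, Q i p * Q j q * Q k r * Q l s * A p q r s)
        = A i j k l)

include hminor2 hiso in
lemma rot_rel {e0 e1 : Fin d} (he : e0 ≠ e1) :
    A e0 e0 e0 e0 = A e0 e0 e1 e1 + 2 * A e0 e1 e0 e1 := by
  set c : ℝ := Real.sqrt 2 / 2 with hcdef
  have hc : c * c = 1/2 := by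
    rw [hcdef, div_mul_div_comm, Real.mul_self_sqrt (by norm_num)]; norm_num
  have hrow := QRot_row he hc
  have h := hiso _ hrow (col_of_row _ hrow) e0 e0 e0 e0
  have hQ : ∀ p, QRot e0 e1 c e0 p = (if p = e0 then c else 0) + (if p = e1 then c else 0) := by
    intro p; simp [QRot]
  simp only [hQ] at h
  simp [add_mul, mul_add, Finset.sum_add_distrib, ite_mul, mul_ite, mul_zero, zero_mul,
    Finset.sum_ite_eq'] at h
  have he' : e1 ≠ e0 := Ne.symm he
  have z1 : A e1 e0 e0 e0 = 0 := flip_zero A hiso e1 e1 e0 e0 e0 (by simp [he])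
  have z2 : A e0 e1 e0 e0 = 0 := flip_zero A hiso e1 e0 e1 e0 e0 (by simp [he])
  have z3 : A e0 e0 e1 e0 = 0 := flip_zero A hiso e1 e0 e0 e1 e0 (by simp [he])
  have z4 : A e0 e0 e0 e1 = 0 := flip_zero A hiso e1 e0 e0 e0 e1 (by simp [he])
  have z5 : A e1 e1 e1 e0 = 0 := flip_zero A hiso e1 e1 e1 e1 e0 (by simp [he])
  have z6 : A e1 e1 e0 e1 = 0 := flip_zero A hiso e1 e1 e1 e0 e1 (by simp [he])
  have z7 : A e1 e0 e1 e1 = 0 := flip_zero A hiso e1 e1 e0 e1 e1 (by simp [he])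
  have z8 : A e0 e1 e1 e1 = 0 := flip_zero A hiso e1 e0 e1 e1 e1 (by simp [he])
  have v1 : A e1 e1 e0 e0 = A e0 e0 e1 e1 := (pair_val A hiso he he').1
  have v2 : A e1 e0 e1 e0 = A e0 e1 e0 e1 := (pair_val A hiso he he').2
  have v3 : A e0 e1 e1 e0 = A e0 e1 e0 e1 := hminor2 e0 e1 e1 e0
  have v4 : A e1 e0 e0 e1 = A e0 e1 e0 e1 := (hminor2 e1 e0 e0 e1).trans v2
  have v5 : A e1 e1 e1 e1 = A e0 e0 e0 e0 := diag_val A hiso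
  rw [z1, z2, z3, z4, z5, z6, z7, z8, v1, v2, v3, v4, v5] at h
  have h4 : c * c * c * c = 1/4 := by nlinarith [hc]
  rw [h4] at h
  linarith
end Rot

section PW
variable {d : ℕ} (A : Tensor4 d)
  (hminor2 : ∀ i j k l, A i j k l = A i j l k)
  (hiso : ∀ Q : Fin d → Fin d → ℝ,
      (∀ i j, (∑ k, Q i k * Q j k) = (if i = j then (1:ℝ) else 0)) →
      (∀ i j, (∑ k, Q k i * Q k j) = (if i = j then (1:ℝ) else 0)) →
      ∀ i j k l, (∑ p, ∑ q, ∑ r, ∑ s, Q i p * Q j q * Q k r * Q l s * A p q r s)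
        = A i j k l)

include hminor2 hiso in
lemma pointwise {e0 e1 : Fin d} (he : e0 ≠ e1) : ∀ i j k l, A i j k l =
    A e0 e0 e1 e1 * ((if i = j then (1:ℝ) else 0) * (if k = l then 1 else 0)) +
    A e0 e1 e0 e1 * ((if i = k then (1:ℝ) else 0) * (if j = l then 1 else 0) +
      (if i = l then (1:ℝ) else 0) * (if j = k then 1 else 0)) := by
  intro i j k l
  by_cases hij : i = j
  · by_cases hkl : k = l
    · by_cases hik : i = k
      · subst hij; subst hik; subst hkl
        have h1 := rot_rel A hminor2 hiso he
        have h2 : A i i i i = A e0 e0 e0 e0 := diag_val A hiso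
        simp only [if_pos rfl, if_true, mul_one, one_mul]
        linarith
      · subst hij; subst hkl
        rw [(pair_val A hiso he hik).1]
        simp [hik]
    · subst hij
      by_cases hki : k = i
      · have hil : i ≠ l := by rw [← hki]; exact hkl
        rw [flip_zero A hiso l i i k l (by simp [hil, hkl])]
        simp [hkl, hil]
      · have hik : ¬ i = k := fun h => hki h.symm
        rw [flip_zero A hiso k i i k l (by simp [hik, Ne.symm hkl])]
        simp [hkl, hik]
  · by_cases hkl : k = l
    · subst hkl
      rw [flip_zero A hiso j i j k k (by by_cases hkj : k = j <;> simp [hij, hkj])]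
      by_cases hik : i = k <;> by_cases hjk : j = k
      · exact absurd (hik.trans hjk.symm) hij
      · simp [hij, hik, hjk, Ne.symm hjk]
      · simp [hij, hik, hjk, Ne.symm hik]
      · simp [hij, hik, hjk, Ne.symm hik, Ne.symm hjk]
    · by_cases hik : i = k
      · by_cases hjl : j = l
        · subst hik; subst hjl
          rw [(pair_val A hiso he hij).2]
          simp [hij, Ne.symm hij]
        · subst hik
          rw [flip_zero A hiso j i j i l (by simp [hij, Ne.symm hjl])]
          simp [hij, hjl, Ne.symm hij]
      · by_cases hil : i = l
        · by_cases hjk : j = k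
          · subst hil; subst hjk
            rw [hminor2 i j j i, (pair_val A hiso he hij).2]
            simp [hij, Ne.symm hij]
          · subst hil
            rw [flip_zero A hiso k i j k i (by simp [hik, hjk])]
            simp [hij, hik, hjk]
        · rw [flip_zero A hiso i i j k l (by simp [Ne.symm hij, Ne.symm hik, Ne.symm hil])]
          simp [hij, hik, hil]
end PW


theorem isotropic_tensor_representation (d : ℕ) (hd : 2 ≤ d) (A : Tensor4 d)
    (hminor1 : ∀ i j k l, A i j k l = A j i k l)
    (hminor2 : ∀ i j k l, A i j k l = A i j l k)
    (hmajor : ∀ i j k l, A i j k l = A k l i j)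
    (hiso : ∀ Q : Fin d → Fin d → ℝ,
      (∀ i j, (∑ k, Q i k * Q j k) = (if i = j then (1:ℝ) else 0)) →
      (∀ i j, (∑ k, Q k i * Q k j) = (if i = j then (1:ℝ) else 0)) →
      ∀ i j k l, (∑ p, ∑ q, ∑ r, ∑ s, Q i p * Q j q * Q k r * Q l s * A p q r s)
        = A i j k l) :
    (A = fun i j k l =>
        ((1 / (d : ℝ)) * ∑ p, ∑ q, A p p q q) * Jt d i j k l +
        (((∑ p, ∑ q, A p q p q) - (1 / (d : ℝ)) * ∑ p, ∑ q, A p p q q) /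
            ((d : ℝ) * ((d : ℝ) + 1) / 2 - 1)) * Kt d i j k l) ∧
    (∀ a b : ℝ, (A = fun i j k l => a * Jt d i j k l + b * Kt d i j k l) →
      a = (1 / (d : ℝ)) * ∑ p, ∑ q, A p p q q ∧
      b = ((∑ p, ∑ q, A p q p q) - (1 / (d : ℝ)) * ∑ p, ∑ q, A p p q q) /
            ((d : ℝ) * ((d : ℝ) + 1) / 2 - 1)) := by
  have h0 : (0:ℕ) < d := by omega
  have h1 : (1:ℕ) < d := by omega
  set e0 : Fin d := ⟨0, h0⟩ with he0
  set e1 : Fin d := ⟨1, h1⟩ with he1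
  have he : e0 ≠ e1 := by simp [he0, he1, Fin.ext_iff]
  have hA := pointwise A hminor2 hiso he
  set α := A e0 e0 e1 e1 with hαdef
  set β := A e0 e1 e0 e1 with hβdef
  have hS1 : (∑ p, ∑ q, A p p q q) = d*d*α + d*(2*β) := by
    have hpt : ∀ p q : Fin d, A p p q q = α + (if p = q then 2*β else 0) := by
      intro p q
      rw [hA p p q q]
      by_cases h : p = q <;> simp [h] <;> ring
    simp only [hpt]
    simp [Finset.sum_add_distrib, Finset.sum_ite_eq, Finset.sum_const, Finset.card_univ,
      Fintype.card_fin, nsmul_eq_mul]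
    ring
  have hS2 : (∑ p, ∑ q, A p q p q) = d*d*β + d*(α+β) := by
    have hpt : ∀ p q : Fin d, A p q p q = β + (if p = q then α + β else 0) := by
      intro p q
      rw [hA p q p q]
      by_cases h : p = q <;> simp [h] <;> ring
    simp only [hpt]
    simp [Finset.sum_add_distrib, Finset.sum_ite_eq, Finset.sum_const, Finset.card_univ,
      Fintype.card_fin, nsmul_eq_mul]
    ring
  have hd0 : (d:ℝ) ≠ 0 := Nat.cast_ne_zero.mpr (by omega)
  have hd2 : (2:ℝ) ≤ (d:ℝ) := by exact_mod_cast hd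
  have hden : (d:ℝ) * ((d:ℝ)+1)/2 - 1 ≠ 0 := by nlinarith
  constructor
  · funext i j k l
    simp only [Jt, Kt, Isym]
    rw [hS1, hS2, hA i j k l]
    generalize (if i = j then (1:ℝ) else 0) = X
    generalize (if k = l then (1:ℝ) else 0) = Y
    generalize (if i = k then (1:ℝ) else 0) = Z
    generalize (if j = l then (1:ℝ) else 0) = W
    generalize (if i = l then (1:ℝ) else 0) = U
    generalize (if j = k then (1:ℝ) else 0) = V
    have ha : (1 / (d:ℝ)) * ((d:ℝ)*(d:ℝ)*α + (d:ℝ)*(2*β)) = (d:ℝ)*α + 2*β := by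
      field_simp
    have hb : (((d:ℝ)*(d:ℝ)*β + (d:ℝ)*(α+β)) - ((d:ℝ)*α + 2*β)) /
        ((d:ℝ)*((d:ℝ)+1)/2 - 1) = 2*β := by
      rw [div_eq_iff hden]
      field_simp
      ring
    rw [ha, hb]
    field_simp
    ring
  · intro a b hab
    have h1 := congrFun (congrFun (congrFun (congrFun hab e0) e0) e1) e1
    have h2 := congrFun (congrFun (congrFun (congrFun hab e0) e1) e0) e1
    simp only [Jt, Kt, Isym] at h1 h2
    rw [← hαdef] at h1
    rw [← hβdef] at h2
    simp [he, Ne.symm he] at h1 h2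
    rw [hS1, hS2]
    have hden3 : ((d:ℝ) * ((d:ℝ) * ((d:ℝ) + 1) - 2) : ℝ) ≠ 0 := by nlinarith
    field_simp at h1 h2
    constructor
    · field_simp
      linear_combination (-1:ℝ) * h1 - h2
    · rw [eq_div_iff hden, ← h2, show (1 / (d:ℝ)) * ((d:ℝ)*(d:ℝ)*α + (d:ℝ)*(2*β)) = (d:ℝ)*α + 2*β from by field_simp]
      ring
end

section
/- With Γ̂₀(ξ) = (α₀/|ξ|²) Σ_i ψ_i(ξ)⊗ψ_i(ξ) + (β₀/|ξ|⁴) ψ(ξ)⊗ψ(ξ) for ξ ≠ 0, one has Γ̂₀(ξ) :: K = (1/d)[(2d(d+1) − 4)α₀ + (d−1)β₀], independent of ξ. -/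
open scoped BigOperators

/-- ψ(ξ) = ξ ⊗ ξ. -/
def psi {d : ℕ} (ξ : Fin d → ℝ) : Fin d → Fin d → ℝ := fun i j => ξ i * ξ j

/-- ψ_c(ξ) = ξ ⊗ e_c + e_c ⊗ ξ. -/
noncomputable def psiB {d : ℕ} (ξ : Fin d → ℝ) (c : Fin d) : Fin d → Fin d → ℝ :=
  fun i j => ξ i * (if j = c then 1 else 0) + (if i = c then 1 else 0) * ξ j

/-- |ξ|². -/
def nsq {d : ℕ} (ξ : Fin d → ℝ) : ℝ := ∑ i, ξ i ^ 2

/-- The Green's tensor Γ̂₀(ξ). -/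
noncomputable def Green {d : ℕ} (α β : ℝ) (ξ : Fin d → ℝ) : Tensor4 d :=
  fun i j k l =>
    α / nsq ξ * ∑ c, psiB ξ c i j * psiB ξ c k l +
    β / (nsq ξ) ^ 2 * (psi ξ i j * psi ξ k l)


lemma sum_swap5 {d : ℕ} (F : Fin d → Fin d → Fin d → Fin d → Fin d → ℝ) :
    ∑ i, ∑ j, ∑ k, ∑ l, ∑ c, F i j k l c = ∑ c, ∑ i, ∑ j, ∑ k, ∑ l, F i j k l c := by
  conv_rhs => rw [Finset.sum_comm]
  refine Finset.sum_congr rfl fun i _ => ?_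
  conv_rhs => rw [Finset.sum_comm]
  refine Finset.sum_congr rfl fun j _ => ?_
  conv_rhs => rw [Finset.sum_comm]
  refine Finset.sum_congr rfl fun k _ => ?_
  conv_rhs => rw [Finset.sum_comm]

lemma contrK {d : ℕ} (σ : Fin d → Fin d → ℝ) (hσ : ∀ i j, σ i j = σ j i) :
    fullContr (tens σ σ) (Kt d) = inn σ σ - trace2 σ ^ 2 / d := by
  simp only [fullContr, tens, Kt, Isym, Jt, inn, trace2]
  have h1 : ∀ i j k l : Fin d, σ i j * σ k l *
      (((if i = k then (1:ℝ) else 0) * (if j = l then 1 else 0) +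
        (if i = l then (1:ℝ) else 0) * (if j = k then 1 else 0)) / 2 -
       (if i = j then (1:ℝ) else 0) * (if k = l then 1 else 0) / d) =
      (σ i j * σ k l * (if i = k then (1:ℝ) else 0) * (if j = l then 1 else 0)) / 2 +
      (σ i j * σ k l * (if i = l then (1:ℝ) else 0) * (if j = k then 1 else 0)) / 2 -
      (σ i j * (if i = j then (1:ℝ) else 0)) * (σ k l * (if k = l then 1 else 0)) / d := by
    intros; ring
  simp only [h1]
  simp only [Finset.sum_sub_distrib, Finset.sum_add_distrib, ← Finset.sum_div,
    mul_ite, mul_one, mul_zero, ite_mul, zero_mul, Finset.sum_ite_eq, Finset.sum_ite_eq',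
    Finset.mem_univ, if_true, ← Finset.sum_mul, ← Finset.mul_sum]
  have h2 : ∀ i j : Fin d, σ i j * σ j i = σ i j * σ i j := by
    intro i j; rw [hσ j i]
  simp only [Finset.sum_ite_irrel, Finset.sum_const_zero, Finset.sum_ite_eq,
    Finset.sum_ite_eq', Finset.mem_univ, if_true, h2, ← Finset.sum_mul, ← Finset.mul_sum]
  rw [sq]
  ring

lemma inn_psiB {d : ℕ} (ξ : Fin d → ℝ) (c : Fin d) :
    inn (psiB ξ c) (psiB ξ c) = 2 * nsq ξ + 2 * ξ c ^ 2 := by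
  simp only [inn, psiB, nsq]
  have h : ∀ i j : Fin d,
      (ξ i * (if j = c then (1:ℝ) else 0) + (if i = c then (1:ℝ) else 0) * ξ j) *
      (ξ i * (if j = c then (1:ℝ) else 0) + (if i = c then (1:ℝ) else 0) * ξ j) =
      ξ i ^ 2 * (if j = c then 1 else 0) + ξ j ^ 2 * (if i = c then 1 else 0) +
      (if i = c then 1 else 0) * (if j = c then (2 * ξ i * ξ j : ℝ) else 0) := by
    intro i j; split_ifs <;> ring
  simp only [h]
  simp only [Finset.sum_add_distrib, mul_ite, mul_one, mul_zero, ite_mul, zero_mul,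
    Finset.sum_ite_eq, Finset.sum_ite_eq', Finset.mem_univ, if_true,
    Finset.sum_ite_irrel, Finset.sum_const_zero]
  ring

lemma trace2_psiB {d : ℕ} (ξ : Fin d → ℝ) (c : Fin d) :
    trace2 (psiB ξ c) = 2 * ξ c := by
  simp only [trace2, psiB]
  simp only [mul_ite, mul_one, mul_zero, ite_mul, one_mul, zero_mul, ← two_mul,
    Finset.sum_ite_eq', Finset.mem_univ, if_true, Finset.sum_add_distrib]

lemma inn_psi {d : ℕ} (ξ : Fin d → ℝ) : inn (psi ξ) (psi ξ) = nsq ξ ^ 2 := by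
  simp only [inn, psi, nsq, sq, Finset.sum_mul_sum]
  refine Finset.sum_congr rfl fun i _ => Finset.sum_congr rfl fun j _ => by ring

lemma trace2_psi {d : ℕ} (ξ : Fin d → ℝ) : trace2 (psi ξ) = nsq ξ := by
  simp only [trace2, psi, nsq, sq]

theorem green_contr_K (d : ℕ) (hd : 2 ≤ d) (α β : ℝ) (ξ : Fin d → ℝ) (hξ : ξ ≠ 0) :
    fullContr (Green α β ξ) (Kt d) =
      (1 / (d : ℝ)) * ((2 * (d : ℝ) * ((d : ℝ) + 1) - 4) * α + ((d : ℝ) - 1) * β) := by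
  have hn : nsq ξ ≠ 0 := by
    intro h
    apply hξ
    funext i
    have hle : ξ i ^ 2 ≤ 0 := h ▸ Finset.single_le_sum (f := fun j => ξ j ^ 2)
      (fun j _ => sq_nonneg _) (Finset.mem_univ i)
    have := sq_nonneg (ξ i)
    have : ξ i ^ 2 = 0 := le_antisymm hle this
    simpa [pow_eq_zero_iff] using this
  have hd0 : (d : ℝ) ≠ 0 := by positivity
  have hsymB : ∀ c : Fin d, ∀ i j, psiB ξ c i j = psiB ξ c j i := by
    intro c i j; simp only [psiB]; ring
  have hsymP : ∀ i j : Fin d, psi ξ i j = psi ξ j i := by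
    intro i j; simp only [psi]; ring
  have expand : fullContr (Green α β ξ) (Kt d) =
      α / nsq ξ * ∑ c, fullContr (tens (psiB ξ c) (psiB ξ c)) (Kt d) +
      β / (nsq ξ) ^ 2 * fullContr (tens (psi ξ) (psi ξ)) (Kt d) := by
    simp only [fullContr, Green, tens]
    have h : ∀ i j k l : Fin d,
        (α / nsq ξ * ∑ c, psiB ξ c i j * psiB ξ c k l +
          β / (nsq ξ) ^ 2 * (psi ξ i j * psi ξ k l)) * Kt d i j k l =
        (∑ c, α / nsq ξ * (psiB ξ c i j * psiB ξ c k l * Kt d i j k l)) +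
        β / (nsq ξ) ^ 2 * (psi ξ i j * psi ξ k l * Kt d i j k l) := by
      intro i j k l
      rw [add_mul]
      congr 1
      · rw [mul_assoc, Finset.sum_mul, Finset.mul_sum]
      · ring
    simp only [h]
    simp only [Finset.sum_add_distrib, ← Finset.mul_sum]
    rw [sum_swap5 (fun i j k l c => psiB ξ c i j * psiB ξ c k l * Kt d i j k l)]
  rw [expand]
  have hsum : ∑ c, fullContr (tens (psiB ξ c) (psiB ξ c)) (Kt d) =
      (2 * d + 2 - 4 / d) * nsq ξ := by
    have : ∀ c : Fin d, fullContr (tens (psiB ξ c) (psiB ξ c)) (Kt d) =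
        2 * nsq ξ + 2 * ξ c ^ 2 - 4 * ξ c ^ 2 / d := by
      intro c
      rw [contrK _ (hsymB c), inn_psiB, trace2_psiB]
      ring
    simp only [this, Finset.sum_sub_distrib, Finset.sum_add_distrib, Finset.sum_const,
      Finset.card_univ, Fintype.card_fin, nsmul_eq_mul, ← Finset.sum_div,
      ← Finset.mul_sum]
    have hnn : ∑ c, ξ c ^ 2 = nsq ξ := rfl
    rw [hnn]
    field_simp
  rw [hsum, contrK _ hsymP, inn_psi, trace2_psi]
  field_simp
end

section
/- Let d ≥ 2, κ₀, μ₀, μ₁ > 0, δμ = μ₁ − μ₀, θ₀ = μ₀(d²κ₀ + 2(d+1)(d−2)μ₀)/(2d(κ₀+2μ₀)), and μ_s = δμ/(μ₁+θ₀). If the inclusion strain is ε = [(1−κ_s)J + (1−μ_s)K]:ε̄ and ε̄ is purely deviatoric (K:ε̄ = ε̄), then tr[ε] = 0 and μ₁ = μ₀ + ((d+2)μ₀(dκ₀+2(d−1)μ₀)/(2d(κ₀+2μ₀)))·[1 − dev[ε]:dev[ε̄]/‖ε̄‖²] + O(δμ²) as δμ → 0. -/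
open scoped BigOperators

lemma act_Jt' (d : ℕ) (τ : Fin d → Fin d → ℝ) (i j : Fin d) :
    act (Jt d) τ i j = (if i = j then (1:ℝ) else 0) * trace2 τ / d := by
  simp [act, Jt, trace2, div_eq_mul_inv, Finset.sum_mul, mul_assoc, mul_comm, mul_left_comm,
    ite_mul, Finset.mul_sum]

lemma act_Isym' (d : ℕ) (τ : Fin d → Fin d → ℝ) (hsym : ∀ i j, τ i j = τ j i) (i j : Fin d) :
    act (Isym d) τ i j = τ i j := by
  simp [act, Isym, div_eq_mul_inv, add_mul, Finset.sum_add_distrib, ite_mul, hsym j i]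
  ring

lemma act_Kt' (d : ℕ) (τ : Fin d → Fin d → ℝ) (hsym : ∀ i j, τ i j = τ j i) (i j : Fin d) :
    act (Kt d) τ i j = τ i j - (if i = j then (1:ℝ) else 0) * trace2 τ / d := by
  have h : act (Kt d) τ i j = act (Isym d) τ i j - act (Jt d) τ i j := by
    simp [act, Kt, sub_mul, Finset.sum_sub_distrib]
  rw [h, act_Isym' d τ hsym, act_Jt' d τ i j]

theorem spherical_inclusion_shear (d : ℕ) (hd : 2 ≤ d) (κ₀ μ₀ : ℝ)
    (hκ : 0 < κ₀) (hμ : 0 < μ₀) (εb : Fin d → Fin d → ℝ)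
    (hsym : ∀ i j, εb i j = εb j i) (hdev : act (Kt d) εb = εb) (hne : εb ≠ 0) :
    ∃ C > (0:ℝ), ∃ δ > (0:ℝ), ∀ μ₁ : ℝ, 0 < μ₁ → |μ₁ - μ₀| < δ → ∀ κs : ℝ,
      let δμ : ℝ := μ₁ - μ₀
      let θ₀ : ℝ := μ₀ * ((d : ℝ) ^ 2 * κ₀ + 2 * ((d : ℝ) + 1) * ((d : ℝ) - 2) * μ₀) /
        (2 * (d : ℝ) * (κ₀ + 2 * μ₀))
      let μs : ℝ := δμ / (μ₁ + θ₀)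
      let ε : Fin d → Fin d → ℝ := fun i j =>
        (1 - κs) * act (Jt d) εb i j + (1 - μs) * act (Kt d) εb i j
      trace2 ε = 0 ∧
      |μ₁ - (μ₀ + (((d : ℝ) + 2) * μ₀ * ((d : ℝ) * κ₀ + 2 * ((d : ℝ) - 1) * μ₀) /
          (2 * (d : ℝ) * (κ₀ + 2 * μ₀))) *
          (1 - inn (dev ε) (dev εb) / inn εb εb))| ≤ C * δμ ^ 2 := by
  classical
  have hd0 : (0:ℝ) < (d:ℝ) := by
    have : (0:ℕ) < d := by omega
    exact_mod_cast this
  have hdne : (d:ℝ) ≠ 0 := ne_of_gt hd0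
  -- trace of εb is zero
  have htr : trace2 εb = 0 := by
    have h1 : trace2 (act (Kt d) εb) = trace2 εb - trace2 εb := by
      unfold trace2
      rw [Finset.sum_congr rfl (fun i _ => act_Kt' d εb hsym i i)]
      simp [Finset.sum_sub_distrib, trace2, hdne]
      field_simp
      ring
    rw [hdev] at h1
    linarith
  -- hence act Jt εb = 0 and act Kt εb = εb
  have hJ : ∀ i j, act (Jt d) εb i j = 0 := by
    intro i j; rw [act_Jt', htr]; simp
  have hK : ∀ i j, act (Kt d) εb i j = εb i j := fun i j => congrFun (congrFun hdev i) j
  -- inn εb εb > 0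
  have hinn : 0 < inn εb εb := by
    rcases lt_or_eq_of_le (a := (0:ℝ)) (b := inn εb εb)
      (Finset.sum_nonneg fun i _ => Finset.sum_nonneg fun j _ => mul_self_nonneg _) with h | h
    · exact h
    · exfalso; apply hne
      funext i j
      have hzero : ∀ i ∈ Finset.univ, (0:ℝ) ≤ ∑ j, εb i j * εb i j :=
        fun i _ => Finset.sum_nonneg fun j _ => mul_self_nonneg _
      have := (Finset.sum_eq_zero_iff_of_nonneg hzero).mp h.symm i (Finset.mem_univ i)
      have hzero2 : ∀ j ∈ Finset.univ, (0:ℝ) ≤ εb i j * εb i j :=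
        fun j _ => mul_self_nonneg _
      have := (Finset.sum_eq_zero_iff_of_nonneg hzero2).mp this j (Finset.mem_univ j)
      exact mul_self_eq_zero.mp this
  have hinnne : inn εb εb ≠ 0 := ne_of_gt hinn
  -- denominators
  have hden : (0:ℝ) < 2 * (d:ℝ) * (κ₀ + 2 * μ₀) := by positivity
  set θ₀ : ℝ := μ₀ * ((d : ℝ) ^ 2 * κ₀ + 2 * ((d : ℝ) + 1) * ((d : ℝ) - 2) * μ₀) /
      (2 * (d : ℝ) * (κ₀ + 2 * μ₀)) with hθ₀
  have hθnn : 0 ≤ θ₀ := by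
    apply div_nonneg _ (le_of_lt hden)
    have hd2 : (2:ℝ) ≤ (d:ℝ) := by exact_mod_cast hd
    have h1 : (0:ℝ) ≤ 2 * ((d:ℝ) + 1) * ((d:ℝ) - 2) * μ₀ := by
      apply mul_nonneg _ hμ.le
      apply mul_nonneg (by linarith) (by linarith)
    have h2 : (0:ℝ) ≤ (d:ℝ) ^ 2 * κ₀ := by positivity
    exact mul_nonneg hμ.le (by linarith)
  have hm : ((d : ℝ) + 2) * μ₀ * ((d : ℝ) * κ₀ + 2 * ((d : ℝ) - 1) * μ₀) /
      (2 * (d : ℝ) * (κ₀ + 2 * μ₀)) = μ₀ + θ₀ := by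
    rw [hθ₀]
    field_simp
    ring
  refine ⟨2 / μ₀, by positivity, μ₀ / 2, by positivity, ?_⟩
  intro μ₁ hμ₁ hδ κs
  intro δμ θ₀' μs ε
  have hθ' : θ₀' = θ₀ := rfl
  have hμ₁θ : μ₀ / 2 ≤ μ₁ + θ₀ := by
    have : μ₀ - μ₁ < μ₀ / 2 := by
      have := abs_lt.mp hδ; linarith [this.1]
    linarith
  have hμ₁θpos : 0 < μ₁ + θ₀ := lt_of_lt_of_le (by positivity) hμ₁θ
  -- ε = (1 - μs) • εb
  have hε : ∀ i j, ε i j = (1 - μs) * εb i j := by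
    intro i j
    show (1 - κs) * act (Jt d) εb i j + (1 - μs) * act (Kt d) εb i j = _
    rw [hJ, hK]; ring
  have htrε : trace2 ε = 0 := by
    unfold trace2
    rw [Finset.sum_congr rfl (fun i _ => hε i i)]
    rw [← Finset.mul_sum]
    have : ∑ i, εb i i = 0 := htr
    rw [this, mul_zero]
  refine ⟨htrε, ?_⟩
  -- dev ε = ε, dev εb = εb
  have hdevε : ∀ i j, dev ε i j = ε i j := by
    intro i j; unfold dev; rw [htrε]; simp
  have hdevεb : ∀ i j, dev εb i j = εb i j := by
    intro i j; unfold dev; rw [htr]; simp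
  have hinn2 : inn (dev ε) (dev εb) = (1 - μs) * inn εb εb := by
    unfold inn
    rw [Finset.mul_sum]
    refine Finset.sum_congr rfl fun i _ => ?_
    rw [Finset.mul_sum]
    refine Finset.sum_congr rfl fun j _ => ?_
    rw [hdevε, hdevεb, hε]; ring
  have hfrac : 1 - inn (dev ε) (dev εb) / inn εb εb = μs := by
    rw [hinn2, mul_div_assoc, div_self hinnne]; ring
  rw [hfrac, hm]
  -- core estimate
  have hμs : μs = δμ / (μ₁ + θ₀) := rfl
  have hkey : μ₁ - (μ₀ + (μ₀ + θ₀) * μs) = δμ ^ 2 / (μ₁ + θ₀) := by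
    rw [hμs]
    have hδμ : δμ = μ₁ - μ₀ := rfl
    field_simp
    ring
  rw [hkey, abs_of_nonneg (by positivity)]
  rw [div_le_iff₀ hμ₁θpos]
  have h1 : 2 / μ₀ * δμ ^ 2 * (μ₁ + θ₀) = (δμ ^ 2) * (2 * (μ₁ + θ₀) / μ₀) := by ring
  rw [h1]
  have h2 : (1:ℝ) ≤ 2 * (μ₁ + θ₀) / μ₀ := by
    rw [le_div_iff₀ hμ]; linarith
  have h3 := mul_le_mul_of_nonneg_left h2 (sq_nonneg δμ)
  linarith
end

section
/- Let u : ℝ^d → ℝ^d be smooth, δp : ℝ^d → ℝ smooth, ε̄ a constant symmetric tensor, and ω₀, μ₀ constants with μ₀ > 0 and ω₀+μ₀ ≠ 0. If −∇δp · ε̄ = ω₀ ∇(∇·u) + μ₀ Δu on ℝ^d, then −∇⊗∇δp : ε̄ = (ω₀+μ₀) Δ(∇·u) and consequently ΔΔu = −(1/μ₀) Δ(∇δp · ε̄) + τ₀ ∇(∇⊗∇δp : ε̄) with τ₀ = ω₀/(μ₀(ω₀+μ₀)). -/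
open scoped BigOperators

/-- Partial derivative in direction i. -/
noncomputable def pd {d : ℕ} (i : Fin d) (f : (Fin d → ℝ) → ℝ) : (Fin d → ℝ) → ℝ :=
  fun x => fderiv ℝ f x (Pi.single i 1)

/-- Laplacian of a scalar field. -/
noncomputable def lap {d : ℕ} (f : (Fin d → ℝ) → ℝ) : (Fin d → ℝ) → ℝ :=
  fun x => ∑ i, pd i (pd i f) x

section helpers

variable {d : ℕ}

lemma contDiff_pd {f : (Fin d → ℝ) → ℝ} (hf : ContDiff ℝ (⊤ : ℕ∞) f) (i : Fin d) :
    ContDiff ℝ (⊤ : ℕ∞) (pd i f) :=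
  ((hf.fderiv_right (by simp)).clm_apply contDiff_const : _)

lemma pd_neg (i : Fin d) (f : (Fin d → ℝ) → ℝ) :
    pd i (fun y => -(f y)) = fun x => -(pd i f x) := by
  funext x; unfold pd; rw [fderiv_fun_neg]; simp

lemma pd_add {f g : (Fin d → ℝ) → ℝ} (hf : ContDiff ℝ (⊤ : ℕ∞) f) (hg : ContDiff ℝ (⊤ : ℕ∞) g) (i : Fin d) :
    pd i (fun y => f y + g y) = fun x => pd i f x + pd i g x := by
  funext x; unfold pd
  rw [fderiv_fun_add ((hf.differentiable (by simp)).differentiableAt)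
    ((hg.differentiable (by simp)).differentiableAt)]
  simp

lemma pd_const_mul {f : (Fin d → ℝ) → ℝ} (hf : ContDiff ℝ (⊤ : ℕ∞) f) (c : ℝ) (i : Fin d) :
    pd i (fun y => c * f y) = fun x => c * pd i f x := by
  funext x; unfold pd
  rw [fderiv_const_mul ((hf.differentiable (by simp)).differentiableAt)]
  simp

lemma pd_mul_const {f : (Fin d → ℝ) → ℝ} (hf : ContDiff ℝ (⊤ : ℕ∞) f) (c : ℝ) (i : Fin d) :
    pd i (fun y => f y * c) = fun x => pd i f x * c := by
  funext x; unfold pd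
  rw [fderiv_mul_const ((hf.differentiable (by simp)).differentiableAt)]
  simp [mul_comm]

lemma pd_sum {ι : Type*} (s : Finset ι) {f : ι → (Fin d → ℝ) → ℝ}
    (hf : ∀ j ∈ s, ContDiff ℝ (⊤ : ℕ∞) (f j)) (i : Fin d) :
    pd i (fun y => ∑ j ∈ s, f j y) = fun x => ∑ j ∈ s, pd i (f j) x := by
  funext x; unfold pd
  rw [fderiv_fun_sum fun j hj => ((hf j hj).differentiable (by simp)).differentiableAt]
  simp

lemma pd_comm {f : (Fin d → ℝ) → ℝ} (hf : ContDiff ℝ (⊤ : ℕ∞) f) (i j : Fin d) :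
    pd i (pd j f) = pd j (pd i f) := by
  funext x
  have hdf : Differentiable ℝ f := hf.differentiable (by simp)
  have hf' : ContDiff ℝ (⊤ : ℕ∞) (fderiv ℝ f) := hf.fderiv_right (by simp)
  have hsymm := second_derivative_symmetric (f := f) (f' := fderiv ℝ f)
      (f'' := fderiv ℝ (fderiv ℝ f) x)
      (fun y => (hdf y).hasFDerivAt) ((hf'.differentiable (by simp) x).hasFDerivAt)
  have key : ∀ a b : Fin d, pd a (pd b f) x =
      fderiv ℝ (fderiv ℝ f) x (Pi.single a 1) (Pi.single b 1) := by
    intro a b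
    show fderiv ℝ (fun y => (fderiv ℝ f y) (Pi.single b 1)) x (Pi.single a 1) = _
    rw [fderiv_clm_apply ((hf'.differentiable (by simp)).differentiableAt)
      (differentiableAt_const _)]
    simp
  rw [key, key, hsymm]

lemma contDiff_lap {f : (Fin d → ℝ) → ℝ} (hf : ContDiff ℝ (⊤ : ℕ∞) f) : ContDiff ℝ (⊤ : ℕ∞) (lap f) :=
  ContDiff.sum fun i _ => contDiff_pd (contDiff_pd hf i) i

lemma pd_pd_pd {f : (Fin d → ℝ) → ℝ} (hf : ContDiff ℝ (⊤ : ℕ∞) f) (k i : Fin d) :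
    pd k (pd i (pd i f)) = pd i (pd i (pd k f)) := by
  calc pd k (pd i (pd i f)) = pd i (pd k (pd i f)) := pd_comm (contDiff_pd hf i) k i
    _ = pd i (pd i (pd k f)) := by rw [pd_comm hf k i]

lemma pd_lin {f g : (Fin d → ℝ) → ℝ} (hf : ContDiff ℝ (⊤ : ℕ∞) f) (hg : ContDiff ℝ (⊤ : ℕ∞) g)
    (a b : ℝ) (i : Fin d) :
    pd i (fun y => a * f y + b * g y) = fun x => a * pd i f x + b * pd i g x := by
  rw [pd_add (contDiff_const.mul hf) (contDiff_const.mul hg),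
    pd_const_mul hf a i, pd_const_mul hg b i]

lemma lap_neg (f : (Fin d → ℝ) → ℝ) :
    lap (fun y => -(f y)) = fun x => -(lap f x) := by
  funext x
  show ∑ i, pd i (pd i fun y => -(f y)) x = -(∑ i, pd i (pd i f) x)
  rw [← Finset.sum_neg_distrib]
  refine Finset.sum_congr rfl fun i _ => ?_
  rw [pd_neg i f, pd_neg i (pd i f)]

lemma lap_lin {f g : (Fin d → ℝ) → ℝ} (hf : ContDiff ℝ (⊤ : ℕ∞) f) (hg : ContDiff ℝ (⊤ : ℕ∞) g)
    (a b : ℝ) :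
    lap (fun y => a * f y + b * g y) = fun x => a * lap f x + b * lap g x := by
  funext x
  show ∑ i, pd i (pd i fun y => a * f y + b * g y) x = _
  calc ∑ i, pd i (pd i fun y => a * f y + b * g y) x
      = ∑ i, (a * pd i (pd i f) x + b * pd i (pd i g) x) := by
        refine Finset.sum_congr rfl fun i _ => ?_
        rw [pd_lin hf hg a b i, pd_lin (contDiff_pd hf i) (contDiff_pd hg i) a b i]
    _ = a * lap f x + b * lap g x := by
        rw [Finset.sum_add_distrib, ← Finset.mul_sum, ← Finset.mul_sum]; rfl

lemma lap_pd {f : (Fin d → ℝ) → ℝ} (hf : ContDiff ℝ (⊤ : ℕ∞) f) (k : Fin d) (x : Fin d → ℝ) :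
    lap (pd k f) x = pd k (lap f) x := by
  calc lap (pd k f) x = ∑ i, pd i (pd i (pd k f)) x := rfl
    _ = ∑ i, pd k (pd i (pd i f)) x :=
        Finset.sum_congr rfl fun i _ => (congrFun (pd_pd_pd hf k i) x).symm
    _ = pd k (fun y => ∑ i, pd i (pd i f) y) x :=
        (congrFun (pd_sum Finset.univ
          (fun i _ => contDiff_pd (contDiff_pd hf i) i) k) x).symm
    _ = pd k (lap f) x := rfl

lemma pd_sum_mul {ι : Type*} [Fintype ι] {f : ι → (Fin d → ℝ) → ℝ}
    (hf : ∀ j, ContDiff ℝ (⊤ : ℕ∞) (f j)) (c : ι → ℝ) (i : Fin d) (x : Fin d → ℝ) :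
    pd i (fun y => ∑ j, f j y * c j) x = ∑ j, pd i (f j) x * c j := by
  rw [pd_sum Finset.univ (f := fun j y => f j y * c j)
    (fun j _ => (hf j).mul contDiff_const) i]
  exact Finset.sum_congr rfl fun j _ => by rw [pd_mul_const (hf j) (c j) i]

end helpers

theorem pde_for_modulus (d : ℕ) (hd : 1 ≤ d)
    (u : (Fin d → ℝ) → Fin d → ℝ) (δp : (Fin d → ℝ) → ℝ)
    (εb : Fin d → Fin d → ℝ) (hεb : ∀ i j, εb i j = εb j i)
    (ω₀ μ₀ : ℝ) (hμ : 0 < μ₀) (hωμ : ω₀ + μ₀ ≠ 0)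
    (hu : ∀ k, ContDiff ℝ (⊤ : ℕ∞) (fun x => u x k)) (hp : ContDiff ℝ (⊤ : ℕ∞) δp)
    (heq : ∀ x k, -(∑ j, pd j δp x * εb j k) =
      ω₀ * pd k (fun y => ∑ i, pd i (fun z => u z i) y) x +
      μ₀ * lap (fun z => u z k) x) :
    (∀ x, -(∑ i, ∑ j, pd i (pd j δp) x * εb i j) =
      (ω₀ + μ₀) * lap (fun y => ∑ i, pd i (fun z => u z i) y) x) ∧
    (∀ x k, lap (lap (fun z => u z k)) x =
      -(1 / μ₀) * lap (fun y => ∑ j, pd j δp y * εb j k) x +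
      (ω₀ / (μ₀ * (ω₀ + μ₀))) *
        pd k (fun y => ∑ i, ∑ j, pd i (pd j δp) y * εb i j) x) := by
  have hdivu : ContDiff ℝ (⊤ : ℕ∞) (fun y => ∑ i, pd i (fun z => u z i) y) :=
    ContDiff.sum fun i _ => contDiff_pd (hu i) i
  have hpdp : ∀ j : Fin d, ContDiff ℝ (⊤ : ℕ∞) (pd j δp) := fun j => contDiff_pd hp j
  have hS : ContDiff ℝ (⊤ : ℕ∞) (fun y => ∑ i, ∑ j, pd i (pd j δp) y * εb i j) :=
    ContDiff.sum fun i _ => ContDiff.sum fun j _ =>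
      (contDiff_pd (hpdp j) i).mul contDiff_const
  have hlapu : ∀ k, ContDiff ℝ (⊤ : ℕ∞) (lap (fun z => u z k)) := fun k => contDiff_lap (hu k)
  have hkfun : ∀ k, (fun x => -(∑ j, pd j δp x * εb j k)) =
      (fun x => ω₀ * pd k (fun y => ∑ i, pd i (fun z => u z i) y) x +
        μ₀ * lap (fun z => u z k) x) := fun k => funext fun x => heq x k
  -- derivative in direction k of the k-th equation
  have hkey : ∀ (k : Fin d) x, -(∑ j, pd k (pd j δp) x * εb j k) =
      ω₀ * pd k (pd k (fun y => ∑ i, pd i (fun z => u z i) y)) x +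
      μ₀ * pd k (lap (fun z => u z k)) x := by
    intro k x
    calc -(∑ j, pd k (pd j δp) x * εb j k)
        = pd k (fun y => -(∑ j, pd j δp y * εb j k)) x := by
          rw [pd_neg k (fun y => ∑ j, pd j δp y * εb j k)]
          show _ = -(pd k (fun y => ∑ j, pd j δp y * εb j k) x)
          rw [pd_sum_mul hpdp (fun j => εb j k) k x]
      _ = pd k (fun y => ω₀ * pd k (fun y => ∑ i, pd i (fun z => u z i) y) y +
            μ₀ * lap (fun z => u z k) y) x := by rw [hkfun k]
      _ = ω₀ * pd k (pd k (fun y => ∑ i, pd i (fun z => u z i) y)) x +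
            μ₀ * pd k (lap (fun z => u z k)) x := by
          rw [pd_lin (contDiff_pd hdivu k) (hlapu k) ω₀ μ₀ k]
  -- divergence of laplacian = laplacian of divergence
  have hclaim2 : ∀ x, ∑ k, pd k (lap (fun z => u z k)) x =
      lap (fun y => ∑ i, pd i (fun z => u z i) y) x := by
    intro x
    calc ∑ k, pd k (lap (fun z => u z k)) x
        = ∑ k, ∑ i, pd i (pd i (pd k (fun z => u z k))) x := by
          refine Finset.sum_congr rfl fun k _ => ?_
          show pd k (fun y => ∑ i, pd i (pd i (fun z => u z k)) y) x = _
          rw [pd_sum Finset.univ (fun i _ => contDiff_pd (contDiff_pd (hu k) i) i) k]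
          exact Finset.sum_congr rfl fun i _ => congrFun (pd_pd_pd (hu k) k i) x
      _ = ∑ i, ∑ k, pd i (pd i (pd k (fun z => u z k))) x := Finset.sum_comm
      _ = lap (fun y => ∑ i, pd i (fun z => u z i) y) x := by
          show _ = ∑ i, pd i (pd i (fun y => ∑ k, pd k (fun z => u z k) y)) x
          refine Finset.sum_congr rfl fun i _ => ?_
          rw [pd_sum Finset.univ (fun k _ => contDiff_pd (hu k) k) i,
              pd_sum Finset.univ
                (fun k _ => contDiff_pd (contDiff_pd (hu k) k) i) i]
  have part1 : ∀ x, -(∑ i, ∑ j, pd i (pd j δp) x * εb i j) =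
      (ω₀ + μ₀) * lap (fun y => ∑ i, pd i (fun z => u z i) y) x := by
    intro x
    calc -(∑ i, ∑ j, pd i (pd j δp) x * εb i j)
        = ∑ k, -(∑ j, pd k (pd j δp) x * εb j k) := by
          rw [← Finset.sum_neg_distrib]
          refine Finset.sum_congr rfl fun i _ => ?_
          congr 1
          exact Finset.sum_congr rfl fun j _ => by rw [hεb i j]
      _ = ∑ k, (ω₀ * pd k (pd k (fun y => ∑ i, pd i (fun z => u z i) y)) x +
            μ₀ * pd k (lap (fun z => u z k)) x) :=
          Finset.sum_congr rfl fun k _ => hkey k x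
      _ = ω₀ * (∑ k, pd k (pd k (fun y => ∑ i, pd i (fun z => u z i) y)) x) +
            μ₀ * (∑ k, pd k (lap (fun z => u z k)) x) := by
          rw [Finset.sum_add_distrib, ← Finset.mul_sum, ← Finset.mul_sum]
      _ = (ω₀ + μ₀) * lap (fun y => ∑ i, pd i (fun z => u z i) y) x := by
          rw [hclaim2 x]
          show ω₀ * lap (fun y => ∑ i, pd i (fun z => u z i) y) x + _ = _
          ring
  refine ⟨part1, ?_⟩
  intro x k
  have hlapdiv : lap (fun y => ∑ i, pd i (fun z => u z i) y) =
      fun y => -(1 / (ω₀ + μ₀)) * (∑ i, ∑ j, pd i (pd j δp) y * εb i j) := by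
    funext y
    have h := part1 y
    field_simp
    linarith
  have hlapF := congrFun (congrArg lap (hkfun k)) x
  rw [lap_neg (fun y => ∑ j, pd j δp y * εb j k),
      lap_lin (contDiff_pd hdivu k) (hlapu k) ω₀ μ₀] at hlapF
  simp only [] at hlapF
  rw [lap_pd hdivu k x, hlapdiv,
      pd_const_mul hS (-(1 / (ω₀ + μ₀))) k] at hlapF
  have hμ' : μ₀ ≠ 0 := ne_of_gt hμ
  simp only [] at hlapF
  field_simp at hlapF ⊢
  linear_combination (-1 : ℝ) * hlapF
end
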